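/- arXiv:2602.10466 — 2 statements merged into one kernel-verified Lean document; each statement's English description precedes it below -/
import Mathlib

section
/- Let n0 be a natural number, k a natural number, and f = f_k(n0). If T^k(n0) is even, then T^{k+1}(n0 + 2^k) = (3(T^k(n0) + 3^f) + 1)/2; and if T^k(n0) is odd, then T^{k+1}(n0 + 2^k) = (T^k(n0) + 3^f)/2. -/
/-!
Adding `a * 2 ^ k` to the starting value does not change the parities of the first `k` iterates:
each step halves the perturbation and multiplies it by `3` exactly when the current iterate is odd,
so after `k` steps it has become `a * 3 ^ f k n`. For `a = 1` the perturbation `3 ^ f k n` is odd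
and flips the parity of the `k`-th iterate, which decides the next step.
-/

/-- The modified Collatz function. -/
def T (n : ℕ) : ℕ := if n % 2 = 0 then n / 2 else (3 * n + 1) / 2

/-- `f k m` is the number of indices `0 ≤ j < k` with `T^[j] m` odd. -/
def f (k m : ℕ) : ℕ := ((Finset.range k).filter (fun j => Odd (T^[j] m))).card

lemma T_of_even {n : ℕ} (h : Even n) : T n = n / 2 := by
  simp [T, Nat.even_iff.mp h]

lemma T_of_odd {n : ℕ} (h : Odd n) : T n = (3 * n + 1) / 2 := by
  simp [T, Nat.odd_iff.mp h]

lemma T_add_two_mul (n m : ℕ) :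
    T (n + 2 * m) = T n + if Odd n then 3 * m else m := by
  rcases Nat.even_or_odd n with hn | hn
  · rw [T_of_even hn, T_of_even (hn.add (even_two_mul m)), if_neg (Nat.not_odd_iff_even.mpr hn)]
    omega
  · rw [T_of_odd hn, T_of_odd (hn.add_even (even_two_mul m)), if_pos hn]
    omega

lemma f_succ (k n : ℕ) :
    f (k + 1) n = f k n + if Odd (T^[k] n) then 1 else 0 := by
  simp only [f, Finset.range_add_one, Finset.filter_insert]
  split_ifs
  · rw [Finset.card_insert_of_notMem (by simp)]
  · rfl

lemma iterate_T_add_mul_two_pow (k n a : ℕ) :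
    T^[k] (n + a * 2 ^ k) = T^[k] n + a * 3 ^ f k n := by
  induction k generalizing a with
  | zero => simp [f]
  | succ k ih =>
    have hstep : n + a * 2 ^ (k + 1) = n + 2 * a * 2 ^ k := by ring
    rw [hstep, Function.iterate_succ_apply', Function.iterate_succ_apply', ih, f_succ,
      mul_assoc 2, T_add_two_mul]
    split_ifs <;> ring

theorem iterate_succ_add_pow (n0 k : ℕ) :
    (Even (T^[k] n0) →
      T^[k + 1] (n0 + 2 ^ k) = (3 * (T^[k] n0 + 3 ^ (f k n0)) + 1) / 2) ∧
    (Odd (T^[k] n0) →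
      T^[k + 1] (n0 + 2 ^ k) = (T^[k] n0 + 3 ^ (f k n0)) / 2) := by
  have hshift : T^[k + 1] (n0 + 2 ^ k) = T (T^[k] n0 + 3 ^ f k n0) := by
    rw [Function.iterate_succ_apply', ← one_mul (2 ^ k), iterate_T_add_mul_two_pow, one_mul]
  have hodd : Odd (3 ^ f k n0) := Odd.pow (by decide)
  rw [hshift]
  exact ⟨fun he => T_of_odd (he.add_odd hodd), fun ho => T_of_even (ho.add_odd hodd)⟩
end

section
/- Suppose n0 ≤ n1 are positive integers with n0 ≡ n1 (mod 2^k). Then for every 0 ≤ ℓ ≤ k, T^ℓ(n0) ≤ T^ℓ(n1), and moreover T^k(n1)·n0 ≤ T^k(n0)·n1 (i.e., the ratio T^k(n)/n is non-increasing along congruent starting points). -/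
/-!
Adding `2 ^ k * d` to `n` does not change the parities of the first `k` iterates of `T`, so
`T^[k] (n + 2 ^ k * d) = T^[k] n + 3 ^ a * d`, where `a` counts the odd steps among them. Both
claims follow: the first directly, the second from `3 ^ a * n ≤ 2 ^ k * T^[k] n`, obtained by
chaining the one-step bound `3 ^ (n % 2) * n ≤ 2 * T n`.
-/

def oddSteps : ℕ → ℕ → ℕ
  | 0, _ => 0
  | k + 1, n => n % 2 + oddSteps k (T n)

theorem T_add_two_mul_s4 (n d : ℕ) : T (n + 2 * d) = T n + 3 ^ (n % 2) * d := by
  rcases Nat.mod_two_eq_zero_or_one n with h | h <;>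
    simp [T, h, Nat.add_mul_mod_self_left] <;> omega

theorem three_pow_mul_le_two_mul_T (n : ℕ) : 3 ^ (n % 2) * n ≤ 2 * T n := by
  rcases Nat.mod_two_eq_zero_or_one n with h | h <;> simp [T, h] <;> omega

theorem T_iterate_add_two_pow_mul (k : ℕ) :
    ∀ n d, T^[k] (n + 2 ^ k * d) = T^[k] n + 3 ^ oddSteps k n * d := by
  induction k with
  | zero => simp [oddSteps]
  | succ k ih =>
    intro n d
    calc T^[k + 1] (n + 2 ^ (k + 1) * d)
        = T^[k] (T (n + 2 * (2 ^ k * d))) := by rw [Function.iterate_succ_apply, pow_succ']; ring_nf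
      _ = T^[k] (T n + 2 ^ k * (3 ^ (n % 2) * d)) := by rw [T_add_two_mul_s4]; ring_nf
      _ = T^[k + 1] n + 3 ^ oddSteps (k + 1) n * d := by
        rw [ih, Function.iterate_succ_apply, oddSteps, pow_add]; ring

theorem three_pow_oddSteps_mul_le (k : ℕ) :
    ∀ n, 3 ^ oddSteps k n * n ≤ 2 ^ k * T^[k] n := by
  induction k with
  | zero => simp [oddSteps]
  | succ k ih =>
    intro n
    calc 3 ^ oddSteps (k + 1) n * n = 3 ^ oddSteps k (T n) * (3 ^ (n % 2) * n) := by
          rw [oddSteps, pow_add]; ring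
      _ ≤ 3 ^ oddSteps k (T n) * (2 * T n) := Nat.mul_le_mul_left _ (three_pow_mul_le_two_mul_T n)
      _ = 2 * (3 ^ oddSteps k (T n) * T n) := by ring
      _ ≤ 2 * (2 ^ k * T^[k] (T n)) := Nat.mul_le_mul_left 2 (ih (T n))
      _ = 2 ^ (k + 1) * T^[k + 1] n := by rw [Function.iterate_succ_apply, pow_succ']; ring

theorem ratio_nonincreasing_general (k n0 n1 : ℕ) (h01 : n0 ≤ n1)
    (hc : n0 % 2 ^ k = n1 % 2 ^ k) :
    (∀ l ≤ k, T^[l] n0 ≤ T^[l] n1) ∧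
    T^[k] n1 * n0 ≤ T^[k] n0 * n1 := by
  have hdvd : 2 ^ k ∣ n1 - n0 := (Nat.modEq_iff_dvd' h01).mp hc
  refine ⟨fun l hl => ?_, ?_⟩
  · obtain ⟨d, hd⟩ := (pow_dvd_pow 2 hl).trans hdvd
    rw [show n1 = n0 + 2 ^ l * d by omega, T_iterate_add_two_pow_mul]
    exact Nat.le_add_right _ _
  · obtain ⟨d, hd⟩ := hdvd
    rw [show n1 = n0 + 2 ^ k * d by omega, T_iterate_add_two_pow_mul]
    have := Nat.mul_le_mul_right d (three_pow_oddSteps_mul_le k n0)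
    nlinarith

theorem ratio_nonincreasing (k n0 n1 : ℕ) (h0 : 1 ≤ n0) (h01 : n0 ≤ n1)
    (hc : n0 % 2 ^ k = n1 % 2 ^ k) :
    (∀ l ≤ k, T^[l] n0 ≤ T^[l] n1) ∧
    T^[k] n1 * n0 ≤ T^[k] n0 * n1 :=
  ratio_nonincreasing_general k n0 n1 h01 hc
end
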